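/- Let G be a graph with a NAC-colouring in which every red component has fewer than 2z vertices and every blue component has fewer than 2z vertices (where a monochromatic component is a maximal connected monochromatic subgraph). Suppose further that there are no two disjoint vertex sets of size z in G with no edges between them. Then it is impossible to partition the blue components into two families B₁, B₂ with |V(B₁)| ≥ 4z and |V(B₂)| ≥ 4z. -/

import Mathlib

open SimpleGraph

/-- A stable (independent) set of vertices. -/
def StableSet {V : Type*} (G : SimpleGraph V) (S : Set V) : Prop :=
  ∀ ⦃u v : V⦄, u ∈ S → v ∈ S → ¬ G.Adj u v

/-- A NAC-colouring: a 2-colouring (red = `true`, blue = `false`) of the edges, using both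
colours, such that no cycle contains exactly one red edge or exactly one blue edge. -/
def IsNACColouring {V : Type*} (G : SimpleGraph V) (c : Sym2 V → Bool) : Prop :=
  (∃ e ∈ G.edgeSet, c e = true) ∧ (∃ e ∈ G.edgeSet, c e = false) ∧
    ∀ ⦃v : V⦄ (w : G.Walk v v), w.IsCycle →
      (w.edges.filter fun e => c e).length ≠ 1 ∧
      (w.edges.filter fun e => !(c e)).length ≠ 1

/-- A monochromatic component: a maximal connected subgraph all of whose edges
receive colour `b`. -/
def IsMonoComponent {V : Type*} (G : SimpleGraph V) (c : Sym2 V → Bool) (b : Bool)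
    (H : G.Subgraph) : Prop :=
  H.Connected ∧ (∀ e ∈ H.edgeSet, c e = b) ∧
    ∀ H' : G.Subgraph, H ≤ H' → H'.Connected → (∀ e ∈ H'.edgeSet, c e = b) → H' = H

lemma select_endgame (z na nb sA sB sa' sb' : ℕ) (hz : 0 < z) (hna : 1 ≤ na)
    (hab : na + nb < 2*z) (hsAle : sA + 1 ≤ z + na)
    (hsBge : 3*z+1 ≤ sB) (hsa'ge : 3*z+2 ≤ sa' + na + 1) (hsb'lt : sb' < z)
    (H1 : sB * na ≤ sA * nb) (H2 : nb * sa' ≤ na * sb') : False := by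
  have hz1 : (1:ℤ) ≤ (z:ℤ) := by exact_mod_cast hz
  have hd1 : (1:ℤ) ≤ (na:ℤ) := by exact_mod_cast hna
  have he0 : (0:ℤ) ≤ (nb:ℤ) := by positivity
  have hde : (na:ℤ) + (nb:ℤ) ≤ 2*(z:ℤ) - 1 := by
    have : (na:ℤ) + (nb:ℤ) < 2*(z:ℤ) := by exact_mod_cast hab
    omega
  have hA : (sA:ℤ) ≤ (z:ℤ) + (na:ℤ) - 1 := by
    have : (sA:ℤ) + 1 ≤ (z:ℤ) + (na:ℤ) := by exact_mod_cast hsAle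
    omega
  have hB : (3*(z:ℤ)+1) ≤ (sB:ℤ) := by exact_mod_cast hsBge
  have ha' : (3*(z:ℤ)+1) - (na:ℤ) ≤ (sa':ℤ) := by
    have : 3*(z:ℤ) + 2 ≤ (sa':ℤ) + (na:ℤ) + 1 := by exact_mod_cast hsa'ge
    omega
  have hb' : (sb':ℤ) ≤ (z:ℤ) - 1 := by
    have : (sb':ℤ) < (z:ℤ) := by exact_mod_cast hsb'lt
    omega
  have h1 : (sB:ℤ) * (na:ℤ) ≤ (sA:ℤ) * (nb:ℤ) := by exact_mod_cast H1
  have h2 : (nb:ℤ) * (sa':ℤ) ≤ (na:ℤ) * (sb':ℤ) := by exact_mod_cast H2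
  have E1 : (3*(z:ℤ)+1) * (na:ℤ) ≤ ((z:ℤ) + (na:ℤ) - 1) * (nb:ℤ) := by
    have t1 : (3*(z:ℤ)+1) * (na:ℤ) ≤ (sB:ℤ) * (na:ℤ) :=
      mul_le_mul_of_nonneg_right hB (by linarith)
    have t2 : (sA:ℤ) * (nb:ℤ) ≤ ((z:ℤ) + (na:ℤ) - 1) * (nb:ℤ) :=
      mul_le_mul_of_nonneg_right hA he0
    linarith
  have E2 : (3*(z:ℤ)+1-(na:ℤ)) * (nb:ℤ) ≤ ((z:ℤ)-1) * (na:ℤ) := by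
    have t1 : (3*(z:ℤ)+1-(na:ℤ)) * (nb:ℤ) ≤ (sa':ℤ) * (nb:ℤ) :=
      mul_le_mul_of_nonneg_right ha' he0
    have t2 : (sb':ℤ) * (na:ℤ) ≤ ((z:ℤ)-1) * (na:ℤ) :=
      mul_le_mul_of_nonneg_right hb' (by linarith)
    linarith
  rcases eq_or_lt_of_le he0 with he1 | he1
  · rw [← he1] at E1
    simp only [mul_zero] at E1
    nlinarith [E1, hd1, hz1]
  have hde' : (na:ℤ) ≤ 2*(z:ℤ) - 2 := by omega
  have hC : (0:ℤ) ≤ (3*(z:ℤ)+1-(na:ℤ)) * (nb:ℤ) := mul_nonneg (by omega) he0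
  have hBpos : (0:ℤ) ≤ ((z:ℤ) + (na:ℤ) - 1) * (nb:ℤ) := mul_nonneg (by omega) he0
  have hmul := mul_le_mul E1 E2 hC hBpos
  have hpos : (0:ℤ) < (na:ℤ)*(nb:ℤ) := mul_pos (by linarith) he1
  have hcanc : ((na:ℤ)*(nb:ℤ)) * ((3*(z:ℤ)+1)*(3*(z:ℤ)+1-(na:ℤ)))
      ≤ ((na:ℤ)*(nb:ℤ)) * (((z:ℤ)+(na:ℤ)-1)*((z:ℤ)-1)) := by linear_combination hmul
  have hfin : (3*(z:ℤ)+1)*(3*(z:ℤ)+1-(na:ℤ)) ≤ ((z:ℤ)+(na:ℤ)-1)*((z:ℤ)-1) :=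
    le_of_mul_le_mul_left hcanc hpos
  nlinarith [hfin, mul_le_mul_of_nonneg_left hde' (show (0:ℤ) ≤ 4*(z:ℤ) by linarith)]

lemma select {ι : Type*} [Fintype ι] [DecidableEq ι] (a b : ι → ℕ) (z : ℕ) (hz : 0 < z)
    (hab : ∀ i, a i + b i < 2 * z) (ha : 4 * z ≤ ∑ i, a i) (hb : 4 * z ≤ ∑ i, b i) :
    ∃ S : Finset ι, z ≤ ∑ i ∈ S, a i ∧ z ≤ ∑ i ∈ Sᶜ, b i := by
  classical
  set key : ι → ℚ := fun i => (b i : ℚ) / ((a i : ℚ) + (b i : ℚ)) with hkey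
  set le : ι → ι → Bool := fun x y => decide (key x ≤ key y) with hle
  set l : List ι := (Finset.univ.toList).mergeSort le with hl
  have hperm : l.Perm Finset.univ.toList := List.mergeSort_perm _ _
  have hnodup : l.Nodup := hperm.nodup_iff.mpr (Finset.nodup_toList _)
  have hsorted : List.Pairwise (fun x y => le x y = true) l :=
    List.pairwise_mergeSort
      (by intro x y w h1 h2
          simp only [hle, decide_eq_true_eq] at h1 h2 ⊢
          exact le_trans h1 h2)
      (by intro x y
          simp only [hle, Bool.or_eq_true, decide_eq_true_eq]
          exact le_total _ _) _
  have hsum_list : ∀ (f : ι → ℕ) (m : List ι), m.Nodup → ∑ i ∈ m.toFinset, f i = (m.map f).sum := by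
    intro f m hm; exact List.sum_toFinset f hm
  have huniv : l.toFinset = Finset.univ := by
    rw [List.toFinset_eq_of_perm _ _ hperm, Finset.toList_toFinset]
  have htotal : ∀ f : ι → ℕ, (l.map f).sum = ∑ i, f i := by
    intro f
    rw [← hsum_list f l hnodup, huniv]
  -- find the minimal prefix whose `a`-sum reaches `z`
  have hPex : ∃ n, z ≤ ((l.take n).map a).sum := by
    refine ⟨l.length, ?_⟩
    rw [List.take_length, htotal]
    omega
  set k := Nat.find hPex with hkdef
  have hk : z ≤ ((l.take k).map a).sum := Nat.find_spec hPex
  have hkpos : 0 < k := by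
    rcases Nat.eq_zero_or_pos k with h | h
    · exfalso; rw [h] at hk; simp at hk; omega
    · exact h
  have hklen : k ≤ l.length := by
    have h1 : z ≤ ((l.take l.length).map a).sum := by
      rw [List.take_length, htotal]; omega
    exact Nat.find_le h1
  have hklt : k - 1 < l.length := by omega
  set p := l[k-1] with hp
  have htakesplit : l.take k = (l.take (k-1)).concat p := by
    rw [List.take_concat_get]
    congr 1; omega
  have hprev : ¬ z ≤ ((l.take (k-1)).map a).sum := Nat.find_min hPex (by omega)
  have hp_mem_take : p ∈ l.take k := by
    rw [htakesplit, List.concat_eq_append]; simp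
  have hp_mem_drop : p ∈ l.drop (k-1) := by
    rw [List.drop_eq_getElem_cons hklt]
    exact List.mem_cons_self
  -- cross-multiplication from the key ordering
  have hcross : ∀ x y : ι, key x ≤ key y → b x * (a y + b y) ≤ b y * (a x + b x) := by
    intro x y hxy
    rcases Nat.eq_zero_or_pos (a x + b x) with h0 | h0
    · have : b x = 0 := by omega
      simp [this]
    rcases Nat.eq_zero_or_pos (a y + b y) with h1 | h1
    · have : b y = 0 := by omega
      simp [this]; omega
    have := (div_le_div_iff₀ (show (0:ℚ) < (a x : ℚ) + (b x : ℚ) by exact_mod_cast h0)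
      (show (0:ℚ) < (a y : ℚ) + (b y : ℚ) by exact_mod_cast h1)).mp hxy
    exact_mod_cast this
  have hcross' : ∀ x y : ι, key x ≤ key y → b x * a y ≤ a x * b y := by
    intro x y hxy
    have := hcross x y hxy
    nlinarith [this]
  -- the chosen family
  set S : Finset ι := (l.take k).toFinset with hS
  have hmemS : ∀ i, i ∈ S ↔ i ∈ l.take k := by intro i; simp [hS]
  have hScompl : ∀ i, i ∈ Sᶜ ↔ i ∈ l.drop k := by
    intro i
    have hiu : i ∈ l := by
      have : i ∈ l.toFinset := by rw [huniv]; exact Finset.mem_univ i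
      simpa using this
    have hsplit : i ∈ l.take k ∨ i ∈ l.drop k := by
      have : i ∈ l.take k ++ l.drop k := by rw [List.take_append_drop]; exact hiu
      exact List.mem_append.mp this
    have hdisj : List.Disjoint (l.take k) (l.drop k) := by
      have hn : (l.take k ++ l.drop k).Nodup := by rw [List.take_append_drop]; exact hnodup
      exact List.disjoint_of_nodup_append hn
    constructor
    · intro h
      rcases hsplit with h' | h'
      · exact absurd ((hmemS i).mpr h') (Finset.mem_compl.mp h)
      · exact h'
    · intro h
      rw [Finset.mem_compl, hmemS]
      intro h'
      exact hdisj h' h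
  -- sums over S and its complement as list sums
  have hnodup_take : (l.take k).Nodup := (List.take_sublist _ _).nodup hnodup
  have hnodup_drop : (l.drop k).Nodup := (List.drop_sublist _ _).nodup hnodup
  have hScompl_eq : Sᶜ = (l.drop k).toFinset := by
    ext i; rw [hScompl]; simp
  have hsumS : ∀ f : ι → ℕ, ∑ i ∈ S, f i = ((l.take k).map f).sum := by
    intro f; rw [hS]; exact hsum_list f _ hnodup_take
  have hsumSc : ∀ f : ι → ℕ, ∑ i ∈ Sᶜ, f i = ((l.drop k).map f).sum := by
    intro f; rw [hScompl_eq]; exact hsum_list f _ hnodup_drop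
  refine ⟨S, by rw [hsumS]; exact hk, ?_⟩
  -- now the arithmetic endgame, by contradiction
  by_contra hcon
  push_neg at hcon
  -- abbreviations
  set sA := ∑ i ∈ S, a i with hsA
  set sB := ∑ i ∈ S, b i with hsB
  set sa' := ∑ i ∈ Sᶜ, a i with hsa'
  set sb' := ∑ i ∈ Sᶜ, b i with hsb'
  have htotA : sA + sa' = ∑ i, a i := Finset.sum_add_sum_compl S a
  have htotB : sB + sb' = ∑ i, b i := Finset.sum_add_sum_compl S b
  have hzA : z ≤ sA := by rw [hsA, hsumS]; exact hk
  have hsb'lt : sb' < z := hcon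
  -- sA ≤ z - 1 + a p
  have hsum_take_split : ((l.take k).map a).sum = ((l.take (k-1)).map a).sum + a p := by
    rw [htakesplit, List.concat_eq_append, List.map_append, List.sum_append]
    simp
  have hsAle : sA + 1 ≤ z + a p := by
    rw [hsA, hsumS, hsum_take_split]
    omega
  have hap : 1 ≤ a p := by
    have := hk
    rw [hsum_take_split] at this
    omega
  -- key comparisons
  have hrel : ∀ x y : ι, le x y = true → key x ≤ key y := by
    intro x y h
    simpa [hle, decide_eq_true_eq] using h
  have hkey_le_p : ∀ x ∈ l.take k, key x ≤ key p := by
    intro x hx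
    rw [htakesplit, List.concat_eq_append, List.mem_append] at hx
    rcases hx with hx | hx
    · exact hrel x p (hsorted.rel_of_mem_take_of_mem_drop hx hp_mem_drop)
    · simp only [List.mem_singleton] at hx
      rw [hx]
  have hkey_p_le : ∀ y ∈ l.drop k, key p ≤ key y := by
    intro y hy
    exact hrel p y (hsorted.rel_of_mem_take_of_mem_drop hp_mem_take hy)
  -- summed cross inequalities
  have H1 : sB * a p ≤ sA * b p := by
    rw [hsB, hsA, Finset.sum_mul, Finset.sum_mul]
    refine Finset.sum_le_sum ?_
    intro i hi
    exact hcross' i p (hkey_le_p i ((hmemS i).mp hi))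
  have H2 : b p * sa' ≤ a p * sb' := by
    rw [hsa', hsb', Finset.mul_sum, Finset.mul_sum]
    refine Finset.sum_le_sum ?_
    intro i hi
    exact hcross' p i (hkey_p_le i ((hScompl i).mp hi))
  -- move to integers
  have hsBge : 3*z + 1 ≤ sB := by omega
  have hsa'ge : 3*z + 2 ≤ sa' + a p + 1 := by omega
  exact select_endgame z (a p) (b p) sA sB sa' sb' hz hap (hab p) hsAle hsBge hsa'ge hsb'lt H1 H2

section ColourGraphs

variable {V : Type*} (G : SimpleGraph V) (c : Sym2 V → Bool) (b : Bool)

/-- The spanning subgraph consisting of edges of colour `b`. -/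
def colG : SimpleGraph V where
  Adj u v := G.Adj u v ∧ c s(u, v) = b
  symm := by
    constructor
    intro u v h
    exact ⟨h.1.symm, by rw [Sym2.eq_swap]; exact h.2⟩
  loopless := by
    constructor
    intro v h
    exact G.irrefl h.1

variable {G c b}

/-- The subgraph of `G` corresponding to a connected component of `colG G c b`. -/
def compSub (K : (colG G c b).ConnectedComponent) : G.Subgraph where
  verts := K.supp
  Adj u v := (colG G c b).Adj u v ∧ u ∈ K.supp ∧ v ∈ K.supp
  adj_sub h := h.1.1
  edge_vert h := h.2.1
  symm := ⟨fun u v h => ⟨h.1.symm, h.2.2, h.2.1⟩⟩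

lemma adj_supp {K : (colG G c b).ConnectedComponent} {u v : V}
    (h : (colG G c b).Adj u v) (hu : u ∈ K.supp) : v ∈ K.supp := by
  rw [SimpleGraph.ConnectedComponent.mem_supp_iff] at hu ⊢
  rw [← hu]
  exact SimpleGraph.ConnectedComponent.eq.mpr h.symm.reachable

lemma walk_lift (K : (colG G c b).ConnectedComponent) {u v : V}
    (p : (colG G c b).Walk u v) :
    ∀ (hu : u ∈ K.supp) (hv : v ∈ K.supp),
      (compSub K).coe.Reachable ⟨u, hu⟩ ⟨v, hv⟩ := by
  induction p with
  | nil => intro hu hv; exact Reachable.refl _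
  | @cons x y w h p ih =>
      intro hu hv
      have hy : y ∈ K.supp := adj_supp h hu
      have hadj : (compSub K).coe.Adj ⟨x, hu⟩ ⟨y, hy⟩ := by
        rw [SimpleGraph.Subgraph.coe_adj]
        exact ⟨h, hu, hy⟩
      exact (hadj.reachable).trans (ih hy hv)

lemma compSub_connected (K : (colG G c b).ConnectedComponent) :
    (compSub K).Connected := by
  rw [SimpleGraph.Subgraph.connected_iff]
  constructor
  · constructor
    rintro ⟨u, hu⟩ ⟨v, hv⟩
    have hr : (colG G c b).Reachable u v := by
      have hu' : (colG G c b).connectedComponentMk u = K :=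
        (SimpleGraph.ConnectedComponent.mem_supp_iff K u).mp hu
      have hv' : (colG G c b).connectedComponentMk v = K :=
        (SimpleGraph.ConnectedComponent.mem_supp_iff K v).mp hv
      exact SimpleGraph.ConnectedComponent.exact (hu'.trans hv'.symm)
    exact hr.elim fun p => walk_lift K p hu hv
  · obtain ⟨v, hv⟩ := K.exists_rep
    exact ⟨v, show v ∈ K.supp from (K.mem_supp_iff v).mpr hv⟩

lemma compSub_mono (K : (colG G c b).ConnectedComponent) :
    ∀ e ∈ (compSub K).edgeSet, c e = b := by
  intro e he
  induction e with
  | h u v =>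
    rw [SimpleGraph.Subgraph.mem_edgeSet] at he
    exact he.1.2

/-- Any subgraph all of whose edges have colour `b` maps into `colG`. -/
lemma mono_adj_colG {H : G.Subgraph} (hmono : ∀ e ∈ H.edgeSet, c e = b)
    {u v : V} (h : H.Adj u v) : (colG G c b).Adj u v :=
  ⟨H.adj_sub h, hmono _ (SimpleGraph.Subgraph.mem_edgeSet.mpr h)⟩

lemma mono_reachable {H : G.Subgraph} (hconn : H.Connected)
    (hmono : ∀ e ∈ H.edgeSet, c e = b) {u v : V} (hu : u ∈ H.verts) (hv : v ∈ H.verts) :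
    (colG G c b).Reachable u v := by
  have hr : H.coe.Reachable ⟨u, hu⟩ ⟨v, hv⟩ := hconn.coe.preconnected ⟨u, hu⟩ ⟨v, hv⟩
  exact hr.elim fun p =>
    ⟨(p.map (⟨Subtype.val, fun {x y} hxy => mono_adj_colG hmono hxy⟩ :
        H.coe →g colG G c b) : (colG G c b).Walk u v)⟩

lemma compSub_isMono (K : (colG G c b).ConnectedComponent) :
    IsMonoComponent G c b (compSub K) := by
  refine ⟨compSub_connected K, compSub_mono K, ?_⟩
  intro H' hle hconn hmono
  refine le_antisymm ?_ hle
  have hverts : H'.verts ⊆ K.supp := by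
    intro v hv
    obtain ⟨w, hw⟩ := K.exists_rep
    have hwsupp : w ∈ K.supp := by rw [SimpleGraph.ConnectedComponent.mem_supp_iff]; exact hw
    have hwH : w ∈ H'.verts := hle.1 hwsupp
    have := mono_reachable hconn hmono hwH hv
    rw [SimpleGraph.ConnectedComponent.mem_supp_iff, ← hw]
    exact (SimpleGraph.ConnectedComponent.eq.mpr this).symm
  exact ⟨hverts, fun u v h =>
    ⟨mono_adj_colG hmono h, hverts (H'.edge_vert h), hverts (H'.edge_vert h.symm)⟩⟩

lemma mono_eq {H : G.Subgraph} (hm : IsMonoComponent G c b H) :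
    ∃ K : (colG G c b).ConnectedComponent, H = compSub K := by
  obtain ⟨hconn, hmono, hmax⟩ := hm
  obtain ⟨-, v₀, hv₀⟩ := SimpleGraph.Subgraph.connected_iff.mp hconn
  refine ⟨(colG G c b).connectedComponentMk v₀, ?_⟩
  set K := (colG G c b).connectedComponentMk v₀ with hK
  have hle : H ≤ compSub K := by
    have hverts : H.verts ⊆ K.supp := by
      intro v hv
      rw [SimpleGraph.ConnectedComponent.mem_supp_iff, hK]
      exact SimpleGraph.ConnectedComponent.eq.mpr (mono_reachable hconn hmono hv hv₀)
    exact ⟨hverts, fun u v h =>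
      ⟨mono_adj_colG hmono h, hverts (H.edge_vert h), hverts (H.edge_vert h.symm)⟩⟩
  exact (hmax _ hle (compSub_connected K) (compSub_mono K)).symm

end ColourGraphs

/-- counting a set fiberwise by connected components -/
lemma comp_count {V : Type*} [Fintype V] {G' : SimpleGraph V}
    [Fintype G'.ConnectedComponent] [DecidableEq G'.ConnectedComponent]
    (X : Set V) (T : Finset G'.ConnectedComponent)
    (hT : ∀ v ∈ X, G'.connectedComponentMk v ∈ T) :
    X.ncard = ∑ i ∈ T, (X ∩ i.supp).ncard := by
  classical
  rw [Set.ncard_eq_toFinset_card _ (Set.toFinite X)]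
  rw [Finset.card_eq_sum_card_fiberwise (f := fun v => G'.connectedComponentMk v) (t := T)
    (by intro v hv; rw [Finset.mem_coe, Set.Finite.mem_toFinset] at hv; exact hT v hv)]
  refine Finset.sum_congr rfl ?_
  intro i hi
  rw [Set.ncard_eq_toFinset_card _ (Set.toFinite _)]
  congr 1
  ext v
  simp only [Finset.mem_filter, Set.Finite.mem_toFinset, Set.mem_inter_iff,
    SimpleGraph.ConnectedComponent.mem_supp_iff]

/-- If every monochromatic component of a NAC-colouring covers fewer than `2z` vertices and
`G` has no two disjoint `z`-sets with no edges between them, then the blue components cannot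
be split into two families each covering at least `4z` vertices. -/
theorem stmt13 {V : Type*} [Fintype V] (G : SimpleGraph V) (z : ℕ)
    (c : Sym2 V → Bool) (hc : IsNACColouring G c)
    (hred : ∀ H : G.Subgraph, IsMonoComponent G c true H → H.verts.ncard < 2 * z)
    (hblue : ∀ H : G.Subgraph, IsMonoComponent G c false H → H.verts.ncard < 2 * z)
    (hP2 : ¬ ∃ A B : Set V, A.ncard = z ∧ B.ncard = z ∧ Disjoint A B ∧
      ∀ a ∈ A, ∀ b ∈ B, ¬ G.Adj a b) :
    ¬ ∃ f : G.Subgraph → Bool,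
      4 * z ≤ (⋃ H ∈ {H : G.Subgraph | IsMonoComponent G c false H ∧ f H = true},
        Subgraph.verts H).ncard ∧
      4 * z ≤ (⋃ H ∈ {H : G.Subgraph | IsMonoComponent G c false H ∧ f H = false},
        Subgraph.verts H).ncard := by
  classical
  rintro ⟨f, h1, h2⟩
  rcases Nat.eq_zero_or_pos z with hz0 | hz
  · exact hP2 ⟨∅, ∅, by simp [hz0], by simp [hz0], by simp, by simp⟩
  haveI : Fintype (colG G c true).ConnectedComponent := Fintype.ofFinite _
  haveI : Fintype (colG G c false).ConnectedComponent := Fintype.ofFinite _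
  set VB1 := (⋃ H ∈ {H : G.Subgraph | IsMonoComponent G c false H ∧ f H = true},
      SimpleGraph.Subgraph.verts H) with hVB1
  set VB2 := (⋃ H ∈ {H : G.Subgraph | IsMonoComponent G c false H ∧ f H = false},
      SimpleGraph.Subgraph.verts H) with hVB2
  -- membership description of VB1/VB2 via blue components
  have hVBmem : ∀ (t : Bool) (v : V),
      (v ∈ ⋃ H ∈ {H : G.Subgraph | IsMonoComponent G c false H ∧ f H = t},
        SimpleGraph.Subgraph.verts H) ↔
      (∃ K : (colG G c false).ConnectedComponent,
        f (compSub K) = t ∧ v ∈ K.supp) := by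
    intro t v
    simp only [Set.mem_iUnion, Set.mem_setOf_eq, exists_prop]
    constructor
    · rintro ⟨H, ⟨hm, hf⟩, hv⟩
      obtain ⟨K, rfl⟩ := mono_eq hm
      exact ⟨K, hf, hv⟩
    · rintro ⟨K, hf, hv⟩
      exact ⟨compSub K, ⟨compSub_isMono K, hf⟩, hv⟩
  -- set up the numeric data on red components
  set a : (colG G c true).ConnectedComponent → ℕ := fun i => (VB1 ∩ i.supp).ncard with ha_def
  set b : (colG G c true).ConnectedComponent → ℕ := fun i => (VB2 ∩ i.supp).ncard with hb_def
  have hdisjVB : Disjoint VB1 VB2 := by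
    rw [Set.disjoint_left]
    intro v hv1 hv2
    obtain ⟨K1, hf1, hs1⟩ := (hVBmem true v).mp hv1
    obtain ⟨K2, hf2, hs2⟩ := (hVBmem false v).mp hv2
    rw [SimpleGraph.ConnectedComponent.mem_supp_iff] at hs1 hs2
    rw [← hs1, hs2] at hf1
    rw [hf1] at hf2
    exact Bool.true_eq_false.mp hf2
  have hab : ∀ i, a i + b i < 2 * z := by
    intro i
    have hd : Disjoint (VB1 ∩ i.supp) (VB2 ∩ i.supp) :=
      Disjoint.mono Set.inter_subset_left Set.inter_subset_left hdisjVB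
    have hu : (VB1 ∩ i.supp) ∪ (VB2 ∩ i.supp) ⊆ i.supp := by
      intro v hv
      rcases hv with hv | hv
      exacts [hv.2, hv.2]
    have hcard : a i + b i ≤ (i.supp).ncard := by
      rw [ha_def, hb_def]
      have := Set.ncard_union_eq hd (Set.toFinite _) (Set.toFinite _)
      rw [← this]
      exact Set.ncard_le_ncard hu (Set.toFinite _)
    have hlt := hred (compSub i) (compSub_isMono i)
    have : (compSub i).verts = i.supp := rfl
    rw [this] at hlt
    omega
  -- totals
  have hcount1 : VB1.ncard = ∑ i, a i := by
    refine comp_count VB1 Finset.univ ?_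
    intro v hv; exact Finset.mem_univ _
  have hcount2 : VB2.ncard = ∑ i, b i := by
    refine comp_count VB2 Finset.univ ?_
    intro v hv; exact Finset.mem_univ _
  have ha4 : 4 * z ≤ ∑ i, a i := by rw [← hcount1]; exact h1
  have hb4 : 4 * z ≤ ∑ i, b i := by rw [← hcount2]; exact h2
  obtain ⟨S, hSa, hSb⟩ := select a b z hz hab ha4 hb4
  -- the two large sets
  set A' := VB1 ∩ (⋃ i ∈ S, (i : (colG G c true).ConnectedComponent).supp) with hA'
  set B' := VB2 ∩ (⋃ i ∈ Sᶜ, (i : (colG G c true).ConnectedComponent).supp) with hB'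
  have hA'card : A'.ncard = ∑ i ∈ S, a i := by
    rw [hA', comp_count (VB1 ∩ _) S ?side]
    case side =>
      rintro v ⟨hv1, hv2⟩
      simp only [Set.mem_iUnion, exists_prop] at hv2
      obtain ⟨i, hiS, hisupp⟩ := hv2
      rwa [(SimpleGraph.ConnectedComponent.mem_supp_iff _ _).mp hisupp]
    refine Finset.sum_congr rfl ?_
    intro i hi
    rw [ha_def]
    congr 1
    ext v
    simp only [Set.mem_inter_iff, Set.mem_iUnion, exists_prop]
    constructor
    · rintro ⟨⟨hv1, -⟩, hv2⟩; exact ⟨hv1, hv2⟩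
    · rintro ⟨hv1, hv2⟩; exact ⟨⟨hv1, ⟨i, hi, hv2⟩⟩, hv2⟩
  have hB'card : B'.ncard = ∑ i ∈ Sᶜ, b i := by
    rw [hB', comp_count (VB2 ∩ _) Sᶜ ?side]
    case side =>
      rintro v ⟨hv1, hv2⟩
      simp only [Set.mem_iUnion, exists_prop] at hv2
      obtain ⟨i, hiS, hisupp⟩ := hv2
      rwa [(SimpleGraph.ConnectedComponent.mem_supp_iff _ _).mp hisupp]
    refine Finset.sum_congr rfl ?_
    intro i hi
    rw [hb_def]
    congr 1
    ext v
    simp only [Set.mem_inter_iff, Set.mem_iUnion, exists_prop]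
    constructor
    · rintro ⟨⟨hv1, -⟩, hv2⟩; exact ⟨hv1, hv2⟩
    · rintro ⟨hv1, hv2⟩; exact ⟨⟨hv1, ⟨i, hi, hv2⟩⟩, hv2⟩
  obtain ⟨A, hAsub, hAcard⟩ := Set.exists_subset_card_eq (show z ≤ A'.ncard by omega)
  obtain ⟨B, hBsub, hBcard⟩ := Set.exists_subset_card_eq (show z ≤ B'.ncard by omega)
  refine hP2 ⟨A, B, hAcard, hBcard, ?_, ?_⟩
  · rw [Set.disjoint_left]
    intro v hvA hvB
    obtain ⟨-, hv1⟩ := hAsub hvA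
    obtain ⟨-, hv2⟩ := hBsub hvB
    simp only [Set.mem_iUnion, exists_prop] at hv1 hv2
    obtain ⟨i, hiS, hi⟩ := hv1
    obtain ⟨j, hjS, hj⟩ := hv2
    rw [SimpleGraph.ConnectedComponent.mem_supp_iff] at hi hj
    rw [hi] at hj
    rw [hj] at hiS
    exact (Finset.mem_compl.mp hjS) hiS
  · intro u hu v hv hadj
    rcases hcb : c s(u, v) with _ | _
    · -- blue edge: both endpoints in the same blue component
      have hgb : (colG G c false).Adj u v := ⟨hadj, hcb⟩
      obtain ⟨hu1, -⟩ := hAsub hu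
      obtain ⟨hv1, -⟩ := hBsub hv
      obtain ⟨K1, hf1, hs1⟩ := (hVBmem true u).mp hu1
      obtain ⟨K2, hf2, hs2⟩ := (hVBmem false v).mp hv1
      rw [SimpleGraph.ConnectedComponent.mem_supp_iff] at hs1 hs2
      have : K1 = K2 := by
        rw [← hs1, ← hs2]
        exact SimpleGraph.ConnectedComponent.eq.mpr hgb.reachable
      rw [this, hf2] at hf1
      exact Bool.false_ne_true hf1
    · -- red edge: both endpoints in the same red component
      have hgr : (colG G c true).Adj u v := ⟨hadj, hcb⟩
      obtain ⟨-, hu2⟩ := hAsub hu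
      obtain ⟨-, hv2⟩ := hBsub hv
      simp only [Set.mem_iUnion, exists_prop] at hu2 hv2
      obtain ⟨i, hiS, hi⟩ := hu2
      obtain ⟨j, hjS, hj⟩ := hv2
      rw [SimpleGraph.ConnectedComponent.mem_supp_iff] at hi hj
      have : i = j := by
        rw [← hi, ← hj]
        exact SimpleGraph.ConnectedComponent.eq.mpr hgr.reachable
      rw [this] at hiS
      exact (Finset.mem_compl.mp hjS) hiS
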